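/- Let A and B be bounded nonnegative self-adjoint operators on a Hilbert space, and suppose there is C ≥ 0 with ⟨g, (AB + BA) g⟩ + C‖g‖² ≥ 0 for all g. Then for every z ≥ 0 and every g, ⟨g, A·B(z+B)^{−1}·A g⟩ + ⟨g, B·A(z+A)^{−1}·B g⟩ + ⟨g, (AB + BA) g⟩ + C⟨g, (z + A + B) g⟩ ≥ 0, where additionally A + B ≥ 1 is assumed. -/

import Mathlib

/-!
Since `B ≥ 0`, the operator `B (z + B)⁻¹` is nonnegative, so by symmetry of `A` the first term
`⟪g, A B (z + B)⁻¹ A g⟫ = ⟪A g, B (z + B)⁻¹ A g⟫` is nonnegative, and likewise the second. The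
rest is at least `⟪g, (AB + BA) g⟫ + C ‖g‖² ≥ 0`, as `⟪g, (z + A + B) g⟫ ≥ ‖g‖²` by `z ≥ 0` and
`A + B ≥ 1`.
-/

open scoped InnerProductSpace

section ResolventPositivity

variable {𝕜 E : Type*} [RCLike 𝕜] [NormedAddCommGroup E] [InnerProductSpace 𝕜 E]

lemma re_inner_smul_add_apply_apply_nonneg {B : E →L[𝕜] E}
    (hB : ∀ x : E, 0 ≤ RCLike.re ⟪x, B x⟫_𝕜) {z : ℝ} (hz : 0 ≤ z) (k : E) :
    0 ≤ RCLike.re ⟪(z : 𝕜) • k + B k, B k⟫_𝕜 := by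
  rw [inner_add_left, inner_smul_left, map_add, RCLike.conj_ofReal, RCLike.re_ofReal_mul,
    inner_self_eq_norm_sq]
  have := hB k
  positivity

lemma re_inner_apply_resolvent_nonneg {B R : E →L[𝕜] E}
    (hB : ∀ x : E, 0 ≤ RCLike.re ⟪x, B x⟫_𝕜) {z : ℝ} (hz : 0 ≤ z)
    (hR : ∀ x : E, (z : 𝕜) • R x + B (R x) = x) (x : E) :
    0 ≤ RCLike.re ⟪x, B (R x)⟫_𝕜 := by
  simpa only [hR x] using re_inner_smul_add_apply_apply_nonneg hB hz (R x)

lemma re_inner_sandwich_resolvent_nonneg {A B R : E →L[𝕜] E} (hA : (A : E →ₗ[𝕜] E).IsSymmetric)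
    (hB : ∀ x : E, 0 ≤ RCLike.re ⟪x, B x⟫_𝕜) {z : ℝ} (hz : 0 ≤ z)
    (hR : ∀ x : E, (z : 𝕜) • R x + B (R x) = x) (x : E) :
    0 ≤ RCLike.re ⟪x, A (B (R (A x)))⟫_𝕜 := by
  have hsymm : ⟪A x, B (R (A x))⟫_𝕜 = ⟪x, A (B (R (A x)))⟫_𝕜 := hA x _
  exact hsymm ▸ re_inner_apply_resolvent_nonneg hB hz hR (A x)

end ResolventPositivity

theorem positivity_resolvent_cross_terms_general
    {H : Type*} [NormedAddCommGroup H] [InnerProductSpace ℂ H] [CompleteSpace H]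
    (A B : H →L[ℂ] H) (hA : IsSelfAdjoint A) (hB : IsSelfAdjoint B)
    (hApos : ∀ g : H, 0 ≤ (⟪g, A g⟫_ℂ).re) (hBpos : ∀ g : H, 0 ≤ (⟪g, B g⟫_ℂ).re)
    (hAB_ge_one : ∀ g : H, ‖g‖ ^ 2 ≤ (⟪g, A g + B g⟫_ℂ).re)
    (C : ℝ) (hC : 0 ≤ C)
    (hcross : ∀ g : H, 0 ≤ (⟪g, A (B g) + B (A g)⟫_ℂ).re + C * ‖g‖ ^ 2)
    (z : ℝ) (hz : 0 ≤ z)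
    (RA RB : H →L[ℂ] H)
    (hRA₁ : ∀ g : H, (z : ℂ) • RA g + A (RA g) = g)
    (hRB₁ : ∀ g : H, (z : ℂ) • RB g + B (RB g) = g)
    (g : H) :
    0 ≤ (⟪g, A (B (RB (A g)))⟫_ℂ).re + (⟪g, B (A (RA (B g)))⟫_ℂ).re
        + (⟪g, A (B g) + B (A g)⟫_ℂ).re
        + C * (z * ‖g‖ ^ 2 + (⟪g, A g⟫_ℂ).re + (⟪g, B g⟫_ℂ).re) := by
  have hABA : 0 ≤ (⟪g, A (B (RB (A g)))⟫_ℂ).re :=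
    re_inner_sandwich_resolvent_nonneg hA.isSymmetric hBpos hz hRB₁ g
  have hBAB : 0 ≤ (⟪g, B (A (RA (B g)))⟫_ℂ).re :=
    re_inner_sandwich_resolvent_nonneg hB.isSymmetric hApos hz hRA₁ g
  have hsum : ‖g‖ ^ 2 ≤ (⟪g, A g⟫_ℂ).re + (⟪g, B g⟫_ℂ).re := by
    simpa only [inner_add_right, Complex.add_re] using hAB_ge_one g
  have hC_term : C * ‖g‖ ^ 2 ≤ C * (z * ‖g‖ ^ 2 + (⟪g, A g⟫_ℂ).re + (⟪g, B g⟫_ℂ).re) :=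
    mul_le_mul_of_nonneg_left (by linarith [mul_nonneg hz (sq_nonneg ‖g‖)]) hC
  linarith [hcross g]

/-- key positivity step. If `A, B ≥ 0` are bounded self-adjoint with
`A + B ≥ 1` and `⟨g,(AB+BA)g⟩ + C‖g‖² ≥ 0`, then for every `z ≥ 0` (with the
resolvents `(z+A)⁻¹`, `(z+B)⁻¹` given as two-sided inverses `RA`, `RB`)
`⟨g, A B(z+B)⁻¹ A g⟩ + ⟨g, B A(z+A)⁻¹ B g⟩ + ⟨g,(AB+BA)g⟩ + C⟨g,(z+A+B)g⟩ ≥ 0`. -/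
theorem positivity_resolvent_cross_terms
    {H : Type*} [NormedAddCommGroup H] [InnerProductSpace ℂ H] [CompleteSpace H]
    (A B : H →L[ℂ] H) (hA : IsSelfAdjoint A) (hB : IsSelfAdjoint B)
    (hApos : ∀ g : H, 0 ≤ (⟪g, A g⟫_ℂ).re) (hBpos : ∀ g : H, 0 ≤ (⟪g, B g⟫_ℂ).re)
    (hAB_ge_one : ∀ g : H, ‖g‖ ^ 2 ≤ (⟪g, A g + B g⟫_ℂ).re)
    (C : ℝ) (hC : 0 ≤ C)
    (hcross : ∀ g : H, 0 ≤ (⟪g, A (B g) + B (A g)⟫_ℂ).re + C * ‖g‖ ^ 2)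
    (z : ℝ) (hz : 0 ≤ z)
    (RA RB : H →L[ℂ] H)
    (hRA₁ : ∀ g : H, (z : ℂ) • RA g + A (RA g) = g)
    (hRA₂ : ∀ g : H, RA ((z : ℂ) • g + A g) = g)
    (hRB₁ : ∀ g : H, (z : ℂ) • RB g + B (RB g) = g)
    (hRB₂ : ∀ g : H, RB ((z : ℂ) • g + B g) = g)
    (g : H) :
    0 ≤ (⟪g, A (B (RB (A g)))⟫_ℂ).re + (⟪g, B (A (RA (B g)))⟫_ℂ).re
        + (⟪g, A (B g) + B (A g)⟫_ℂ).re
        + C * (z * ‖g‖ ^ 2 + (⟪g, A g⟫_ℂ).re + (⟪g, B g⟫_ℂ).re) :=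
  positivity_resolvent_cross_terms_general A B hA hB hApos hBpos hAB_ge_one C hC hcross z hz RA RB
    hRA₁ hRB₁ g
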